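/- Let F = [[0, Eᵗ],[E, ×B]] with smooth E, B satisfying Maxwell's equations with sources ρ, J, and let T_F := (1/2)·cF·c̄F where cF = F - iF* and c̄F is its complex conjugate. Then the divergence of the stress-energy tensor equals the Lorentz force: T_F·(-∂ₜ, ∇)ᵗ = F·(ρ, J)ᵗ. -/

import Mathlib

open Matrix

noncomputable section

/-- Cross product `v × w`. -/
def crossVec {α : Type*} [CommRing α] (v w : Fin 3 → α) : Fin 3 → α :=
  ![v 1 * w 2 - v 2 * w 1, v 2 * w 0 - v 0 * w 2, v 0 * w 1 - v 1 * w 0]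

/-- The matrix `×w`, satisfying `(×w) v = v × w`. -/
def crossMat {α : Type*} [CommRing α] (w : Fin 3 → α) : Matrix (Fin 3) (Fin 3) α :=
  !![0, w 2, -(w 1); -(w 2), 0, w 0; w 1, -(w 0), 0]

/-- The block matrix `[[0, Aᵗ],[A, ×C]]`. -/
def blockM {α : Type*} [CommRing α] (A C : Fin 3 → α) : Matrix (Fin 4) (Fin 4) α :=
  !![0,     A 0,      A 1,      A 2;
     A 0,   0,        C 2,      -(C 1);
     A 1,   -(C 2),   0,        C 0;
     A 2,   C 1,      -(C 0),   0]

/-- `cF(A) = [[0, Aᵗ],[A, ×(-iA)]]`. -/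
def cF (A : Fin 3 → ℂ) : Matrix (Fin 4) (Fin 4) ℂ := blockM A ((-Complex.I) • A)

/-- `c̄F(A) = [[0, Aᵗ],[A, ×(iA)]]`. -/
def cFbar (A : Fin 3 → ℂ) : Matrix (Fin 4) (Fin 4) ℂ := blockM A (Complex.I • A)

/-- The complex-bilinear inner product on ℂ³. -/
def bilin (v w : Fin 3 → ℂ) : ℂ := v 0 * w 0 + v 1 * w 1 + v 2 * w 2

/-- Points of space-time `ℝ⁴`, coordinate `0` is time. -/
abbrev Pt := Fin 4 → ℝ

/-- Partial derivative in the `i`-th coordinate direction. -/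
def pd {E : Type*} [NormedAddCommGroup E] [NormedSpace ℝ E]
    (i : Fin 4) (f : Pt → E) (x : Pt) : E := fderiv ℝ f x (Pi.single i 1)

/-- Spatial divergence `∇·A`. -/
def divg {E : Type*} [NormedAddCommGroup E] [NormedSpace ℝ E]
    (A : Pt → Fin 3 → E) (x : Pt) : E := ∑ i : Fin 3, pd i.succ (fun y => A y i) x

/-- Spatial curl `∇×A`. -/
def curl {E : Type*} [NormedAddCommGroup E] [NormedSpace ℝ E]
    (A : Pt → Fin 3 → E) (x : Pt) : Fin 3 → E :=
  ![pd 2 (fun y => A y 2) x - pd 3 (fun y => A y 1) x,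
    pd 3 (fun y => A y 0) x - pd 1 (fun y => A y 2) x,
    pd 1 (fun y => A y 1) x - pd 2 (fun y => A y 0) x]

/-- Spatial gradient `∇f`. -/
def grad {E : Type*} [NormedAddCommGroup E] [NormedSpace ℝ E]
    (f : Pt → E) (x : Pt) : Fin 3 → E := fun i => pd i.succ f x

/-- Time derivative of a vector field, componentwise. -/
def pdtV {E : Type*} [NormedAddCommGroup E] [NormedSpace ℝ E]
    (A : Pt → Fin 3 → E) (x : Pt) : Fin 3 → E := fun i => pd 0 (fun y => A y i) x

/-- Spatial Laplacian `∇²f`. -/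
def lap {E : Type*} [NormedAddCommGroup E] [NormedSpace ℝ E]
    (f : Pt → E) (x : Pt) : E := ∑ i : Fin 3, pd i.succ (pd i.succ f) x

/-- The matrix divergence `M·(-∂ₜ,∇)ᵗ`: `i`-th component `-∂ₜ(M_{i0}) + Σⱼ ∂ⱼ(M_{ij})`. -/
def divNeg {E : Type*} [NormedAddCommGroup E] [NormedSpace ℝ E]
    (M : Pt → Matrix (Fin 4) (Fin 4) E) (x : Pt) : Fin 4 → E :=
  fun i => -(pd 0 (fun y => M y i 0) x) + ∑ j : Fin 3, pd j.succ (fun y => M y i j.succ) x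

/-- The matrix divergence `M·(∂ₜ,∇)ᵗ`: `i`-th component `∂ₜ(M_{i0}) + Σⱼ ∂ⱼ(M_{ij})`. -/
def divPos {E : Type*} [NormedAddCommGroup E] [NormedSpace ℝ E]
    (M : Pt → Matrix (Fin 4) (Fin 4) E) (x : Pt) : Fin 4 → E :=
  fun i => pd 0 (fun y => M y i 0) x + ∑ j : Fin 3, pd j.succ (fun y => M y i j.succ) x

/-- Maxwell's equations (1)-(4). -/
def MaxwellEq {E' : Type*} [NormedAddCommGroup E'] [NormedSpace ℝ E']
    (E B : Pt → Fin 3 → E') (ρ : Pt → E') (J : Pt → Fin 3 → E') : Prop :=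
  (∀ x i, curl E x i + pdtV B x i = 0) ∧
  (∀ x i, curl B x i - pdtV E x i = J x i) ∧
  (∀ x, divg E x = ρ x) ∧
  (∀ x, divg B x = 0)

/-!
The tensor `½·cF·c̄F` is real: it is the Maxwell stress-energy tensor of `(E, B)`. Its divergence,
computed entrywise by the product rule, is a linear combination of Maxwell's equations with
coefficients the components of `E` and `B`: the time row is
`E·(∇×B - ∂ₜE) - B·(∇×E + ∂ₜB) = E·J`, and the spatial rows are
`ρE + J×B = (∇·E)E + (∇·B)B - E×(∇×E + ∂ₜB) - B×(∇×B - ∂ₜE)`.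
-/

section PartialDerivative

variable {F : Type*} [NormedAddCommGroup F] [NormedSpace ℝ F] {f g : Pt → F} {x : Pt}

lemma pd_const (c : F) (i : Fin 4) : pd i (fun _ => c) x = 0 := by
  simp [pd]

lemma pd_add (hf : DifferentiableAt ℝ f x) (hg : DifferentiableAt ℝ g x) (i : Fin 4) :
    pd i (fun y => f y + g y) x = pd i f x + pd i g x := by
  simp [pd, fderiv_fun_add hf hg]

lemma pd_sub (hf : DifferentiableAt ℝ f x) (hg : DifferentiableAt ℝ g x) (i : Fin 4) :
    pd i (fun y => f y - g y) x = pd i f x - pd i g x := by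
  simp [pd, fderiv_fun_sub hf hg]

end PartialDerivative

lemma pd_mul {𝔸 : Type*} [NormedCommRing 𝔸] [NormedAlgebra ℝ 𝔸] {f g : Pt → 𝔸} {x : Pt}
    (hf : DifferentiableAt ℝ f x) (hg : DifferentiableAt ℝ g x) (i : Fin 4) :
    pd i (fun y => f y * g y) x = pd i f x * g x + f x * pd i g x := by
  simp [pd, fderiv_fun_mul hf hg, smul_eq_mul]
  ring

lemma pd_ofReal (f : Pt → ℝ) (i : Fin 4) (x : Pt) :
    pd i (fun y => (f y : ℂ)) x = pd i f x := by
  by_cases hf : DifferentiableAt ℝ f x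
  · change fderiv ℝ (Complex.ofRealCLM ∘ f) x _ = _
    simp [fderiv_comp x Complex.ofRealCLM.differentiableAt hf, pd]
  · have hf' : ¬DifferentiableAt ℝ (fun y => (f y : ℂ)) x := fun h =>
      hf (by simpa [Function.comp_def] using Complex.reCLM.differentiableAt.comp x h)
    simp [pd, fderiv_zero_of_not_differentiableAt hf, fderiv_zero_of_not_differentiableAt hf']

lemma divNeg_map_ofReal (M : Pt → Matrix (Fin 4) (Fin 4) ℝ) (x : Pt) :
    divNeg (fun y => (M y).map Complex.ofReal) x = fun i => ((divNeg M x i : ℝ) : ℂ) := by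
  ext i
  simp [divNeg, pd_ofReal]

lemma blockM_map {α β : Type*} [CommRing α] [CommRing β] (f : α →+* β) (A C : Fin 3 → α) :
    (blockM A C).map f = blockM (f ∘ A) (f ∘ C) := by
  ext i j
  fin_cases i <;> fin_cases j <;> simp [blockM]

/-- Energy density `½(|e|² + |b|²)` in the corner, the Poynting vector `e × b` down the first
column and its negative along the first row, and the Maxwell stress `eᵢeⱼ + bᵢbⱼ - ½δᵢⱼ(|e|² + |b|²)`
in the spatial block. -/
def stressEnergy (e b : Fin 3 → ℝ) : Matrix (Fin 4) (Fin 4) ℝ :=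
  !![1/2*(e 0*e 0+e 1*e 1+e 2*e 2+b 0*b 0+b 1*b 1+b 2*b 2),
       e 2*b 1 - e 1*b 2,  e 0*b 2 - e 2*b 0,  e 1*b 0 - e 0*b 1;
     e 1*b 2 - e 2*b 1,
       1/2*(e 0*e 0+b 0*b 0-e 1*e 1-b 1*b 1-e 2*e 2-b 2*b 2),
       e 0*e 1 + b 0*b 1,  e 0*e 2 + b 0*b 2;
     e 2*b 0 - e 0*b 2,
       e 0*e 1 + b 0*b 1,
       1/2*(e 1*e 1+b 1*b 1-e 0*e 0-b 0*b 0-e 2*e 2-b 2*b 2),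
       e 1*e 2 + b 1*b 2;
     e 0*b 1 - e 1*b 0,
       e 0*e 2 + b 0*b 2,  e 1*e 2 + b 1*b 2,
       1/2*(e 2*e 2+b 2*b 2-e 0*e 0-b 0*b 0-e 1*e 1-b 1*b 1)]

lemma half_smul_cF_mul_cFbar_eq_stressEnergy_map (e b : Fin 3 → ℝ) :
    ((1 : ℂ) / 2) • (cF (fun i => (e i : ℂ) + Complex.I * b i) *
      cFbar (fun i => (e i : ℂ) - Complex.I * b i)) = (stressEnergy e b).map Complex.ofReal := by
  ext i j
  fin_cases i <;> fin_cases j <;>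
  · simp [cF, cFbar, blockM, stressEnergy]
    grind [Complex.I_sq]

lemma divNeg_stressEnergy {E B : Pt → Fin 3 → ℝ} {ρ : Pt → ℝ} {J : Pt → Fin 3 → ℝ} {x : Pt}
    (hE : DifferentiableAt ℝ E x) (hB : DifferentiableAt ℝ B x) (hM : MaxwellEq E B ρ J) :
    divNeg (fun y => stressEnergy (E y) (B y)) x = blockM (E x) (B x) *ᵥ Fin.cons (ρ x) (J x) := by
  rw [differentiableAt_pi] at hE hB
  obtain ⟨faraday, ampere, gauss, gaussB⟩ := hM
  obtain ⟨f0, f1, f2⟩ : _ ∧ _ ∧ _ := ⟨faraday x 0, faraday x 1, faraday x 2⟩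
  obtain ⟨a0, a1, a2⟩ : _ ∧ _ ∧ _ := ⟨ampere x 0, ampere x 1, ampere x 2⟩
  have g := gauss x
  have gB := gaussB x
  simp only [curl, pdtV, divg, Fin.sum_univ_three, cons_val_zero, cons_val_one, cons_val,
    Fin.succ_zero_eq_one, Fin.succ_one_eq_two, Fin.reduceSucc] at f0 f1 f2 a0 a1 a2 g gB
  have hcons : (Fin.cons (ρ x) (J x) : Fin 4 → ℝ) = ![ρ x, J x 0, J x 1, J x 2] := by
    ext i; fin_cases i <;> rfl
  rw [hcons]
  ext i
  fin_cases i <;> simp (disch := fun_prop) [divNeg, stressEnergy, blockM, mulVec, dotProduct,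
    Fin.sum_univ_four, Fin.sum_univ_three, pd_add, pd_sub, pd_mul, pd_const]
  · linear_combination E x 0 * a0 + E x 1 * a1 + E x 2 * a2 - B x 0 * f0 - B x 1 * f1 - B x 2 * f2
  · linear_combination E x 0 * g + B x 0 * gB - E x 1 * f2 + E x 2 * f1 - B x 1 * a2 + B x 2 * a1
  · linear_combination E x 1 * g + B x 1 * gB - E x 2 * f0 + E x 0 * f2 - B x 2 * a0 + B x 0 * a2
  · linear_combination E x 2 * g + B x 2 * gB - E x 0 * f1 + E x 1 * f0 - B x 0 * a1 + B x 1 * a0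

theorem stress_energy_divergence_is_lorentz_force_general
    (E B : Pt → Fin 3 → ℝ) (ρ : Pt → ℝ) (J : Pt → Fin 3 → ℝ)
    (hE : ContDiff ℝ (⊤ : ℕ∞) E) (hB : ContDiff ℝ (⊤ : ℕ∞) B)
    (hM : MaxwellEq E B ρ J) :
    ∀ x, divNeg (fun y => ((1 : ℂ)/2) •
            (cF (fun i => (E y i : ℂ) + Complex.I * B y i) *
             cFbar (fun i => (E y i : ℂ) - Complex.I * B y i))) x
        = (blockM (fun i => (E x i : ℂ)) (fun i => (B x i : ℂ))).mulVec
            (Fin.cons ((ρ x : ℂ)) (fun i => (J x i : ℂ))) := by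
  intro x
  have hEx : DifferentiableAt ℝ E x := (hE.differentiable (by simp)).differentiableAt
  have hBx : DifferentiableAt ℝ B x := (hB.differentiable (by simp)).differentiableAt
  simp only [half_smul_cF_mul_cFbar_eq_stressEnergy_map, divNeg_map_ofReal,
    divNeg_stressEnergy hEx hBx hM]
  ext i
  have h := RingHom.map_mulVec Complex.ofRealHom (blockM (E x) (B x)) (Fin.cons (ρ x) (J x)) i
  rwa [blockM_map, Fin.comp_cons] at h

theorem stress_energy_divergence_is_lorentz_force
    (E B : Pt → Fin 3 → ℝ) (ρ : Pt → ℝ) (J : Pt → Fin 3 → ℝ)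
    (hE : ContDiff ℝ (⊤ : ℕ∞) E) (hB : ContDiff ℝ (⊤ : ℕ∞) B)
    (hρ : ContDiff ℝ (⊤ : ℕ∞) ρ) (hJ : ContDiff ℝ (⊤ : ℕ∞) J)
    (hM : MaxwellEq E B ρ J) :
    ∀ x, divNeg (fun y => ((1 : ℂ)/2) •
            (cF (fun i => (E y i : ℂ) + Complex.I * B y i) *
             cFbar (fun i => (E y i : ℂ) - Complex.I * B y i))) x
        = (blockM (fun i => (E x i : ℂ)) (fun i => (B x i : ℂ))).mulVec
            (Fin.cons ((ρ x : ℂ)) (fun i => (J x i : ℂ))) :=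
  stress_energy_divergence_is_lorentz_force_general E B ρ J hE hB hM
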